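/- Let p ∈ [1,∞) and let κ be the dyadic Cantor measure on ℝ. Then for every integer k ≥ 0, W_p(κ, Δ_{2^k}) ≤ 3^{-k} · W_p(κ, Δ₁); in particular, setting s = log 2 / log 3, W_p(κ, Δ_{2^k}) · (2^k)^{1/s} ≤ W_p(κ, Δ₁) for all k. -/

import Mathlib

open MeasureTheory Metric Filter
open scoped ENNReal

noncomputable section

/-- A transport plan (coupling) between two measures. -/
def IsCoupling {X : Type*} [MeasurableSpace X] (μ ν : Measure X) (π : Measure (X × X)) : Prop :=
  π.map Prod.fst = μ ∧ π.map Prod.snd = ν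

/-- The `L^p` Wasserstein distance between two measures of equal mass. -/
def Wp {X : Type*} [PseudoMetricSpace X] [MeasurableSpace X] (p : ℝ) (μ ν : Measure X) : ℝ≥0∞ :=
  ⨅ (π : Measure (X × X)) (_ : IsCoupling μ ν π),
    (∫⁻ z, edist z.1 z.2 ^ p ∂π) ^ (1 / p)

/-- A measure is supported on at most `N` points. -/
def FinSupported {X : Type*} [MeasurableSpace X] (N : ℕ) (ν : Measure X) : Prop :=
  ∃ S : Finset X, S.card ≤ N ∧ ν ((S : Set X))ᶜ = 0

/-- The `L^p` Wasserstein distance from `μ` to the set `Δ_N` of measures supported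
on at most `N` points and having the same total mass as `μ`. -/
def WpDelta {X : Type*} [PseudoMetricSpace X] [MeasurableSpace X]
    (p : ℝ) (μ : Measure X) (N : ℕ) : ℝ≥0∞ :=
  ⨅ (ν : Measure X) (_ : FinSupported N ν ∧ ν Set.univ = μ Set.univ), Wp p μ ν

/-- The (topological) support of a measure: points all of whose open neighborhoods
have positive measure. -/
def measSupport {X : Type*} [TopologicalSpace X] [MeasurableSpace X] (μ : Measure X) : Set X :=
  {x | ∀ U : Set X, IsOpen U → x ∈ U → 0 < μ U}

/-- The contraction of ratio `1/3` fixing `0`. -/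
def S0 (x : ℝ) : ℝ := x / 3

/-- The contraction of ratio `1/3` fixing `1`. -/
def S1 (x : ℝ) : ℝ := 1 + (x - 1) / 3

/-- `κ` is the dyadic Cantor measure: the unique compactly supported Borel probability
measure on `ℝ` satisfying `κ = ½ S0_# κ + ½ S1_# κ`. -/
def IsDyadicCantorMeasure (κ : Measure ℝ) : Prop :=
  IsProbabilityMeasure κ ∧ (∃ K : Set ℝ, IsCompact K ∧ κ Kᶜ = 0) ∧
    κ = (2⁻¹ : ℝ≥0∞) • κ.map S0 + (2⁻¹ : ℝ≥0∞) • κ.map S1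

open scoped NNReal

/-!
If `ν` is supported on `N` points and `π` couples `κ` with `ν`, pushing both through the
self-similarity gives `½ S0_# ν + ½ S1_# ν`, supported on `2N` points, coupled to
`κ = ½ S0_# κ + ½ S1_# κ` by `½ (S0 × S0)_# π + ½ (S1 × S1)_# π`. Both maps contract distances by
`1/3`, so this plan costs `3^{-p}` times as much as `π`. Hence
`W_p(κ, Δ_{2N}) ≤ W_p(κ, Δ_N) / 3`, and `k` iterations give the bound; the second form is the
same statement because `(2^k)^{1/s} = 3^k`.
-/

def hutchinson {X : Type*} [MeasurableSpace X] (a b : ℝ≥0∞) (f g : X → X) (μ : Measure X) :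
    Measure X :=
  a • μ.map f + b • μ.map g

lemma hutchinson_apply_univ {X : Type*} [MeasurableSpace X] {a b : ℝ≥0∞} {f g : X → X}
    (hf : Measurable f) (hg : Measurable g) (μ : Measure X) :
    hutchinson a b f g μ Set.univ = a * μ Set.univ + b * μ Set.univ := by
  simp only [hutchinson, Measure.add_apply, Measure.smul_apply, smul_eq_mul,
    Measure.map_apply hf MeasurableSet.univ, Measure.map_apply hg MeasurableSet.univ,
    Set.preimage_univ]

section Coupling

variable {X Y : Type*} [MeasurableSpace X] [MeasurableSpace Y]
  {μ μ' ν ν' : Measure X} {π π' : Measure (X × X)}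

lemma IsCoupling.add (h : IsCoupling μ ν π) (h' : IsCoupling μ' ν' π') :
    IsCoupling (μ + μ') (ν + ν') (π + π') :=
  ⟨by rw [Measure.map_add _ _ measurable_fst, h.1, h'.1],
    by rw [Measure.map_add _ _ measurable_snd, h.2, h'.2]⟩

lemma IsCoupling.smul (c : ℝ≥0∞) (h : IsCoupling μ ν π) : IsCoupling (c • μ) (c • ν) (c • π) :=
  ⟨by rw [Measure.map_smul, h.1], by rw [Measure.map_smul, h.2]⟩

lemma IsCoupling.map {f : X → Y} (hf : Measurable f) (h : IsCoupling μ ν π) :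
    IsCoupling (μ.map f) (ν.map f) (π.map (Prod.map f f)) := by
  constructor
  · rw [Measure.map_map measurable_fst (hf.prodMap hf), ← h.1, Measure.map_map hf measurable_fst]
    rfl
  · rw [Measure.map_map measurable_snd (hf.prodMap hf), ← h.2, Measure.map_map hf measurable_snd]
    rfl

lemma IsCoupling.hutchinson {f g : X → X} (hf : Measurable f) (hg : Measurable g) (a b : ℝ≥0∞)
    (h : IsCoupling μ ν π) :
    IsCoupling (hutchinson a b f g μ) (hutchinson a b f g ν)
      (hutchinson a b (Prod.map f f) (Prod.map g g) π) :=
  ((h.map hf).smul a).add ((h.map hg).smul b)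

end Coupling

section FinSupported

variable {X Y : Type*} [MeasurableSpace X] [MeasurableSpace Y] {N M : ℕ} {μ ν : Measure X}

lemma FinSupported.add (hμ : FinSupported N μ) (hν : FinSupported M ν) :
    FinSupported (N + M) (μ + ν) := by
  classical
  obtain ⟨S, hS, hμS⟩ := hμ
  obtain ⟨T, hT, hνT⟩ := hν
  refine ⟨S ∪ T, (S.card_union_le T).trans (add_le_add hS hT), ?_⟩
  rw [Measure.add_apply, measure_mono_null (by simp) hμS, measure_mono_null (by simp) hνT,
    add_zero]

lemma FinSupported.smul (c : ℝ≥0∞) (hμ : FinSupported N μ) : FinSupported N (c • μ) := by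
  obtain ⟨S, hS, hμS⟩ := hμ
  exact ⟨S, hS, by rw [Measure.smul_apply, hμS, smul_zero]⟩

lemma FinSupported.map [MeasurableSingletonClass Y] {f : X → Y} (hf : Measurable f)
    (hμ : FinSupported N μ) : FinSupported N (μ.map f) := by
  classical
  obtain ⟨S, hS, hμS⟩ := hμ
  refine ⟨S.image f, Finset.card_image_le.trans hS, ?_⟩
  rw [Measure.map_apply hf (Finset.measurableSet _).compl]
  refine measure_mono_null ?_ hμS
  intro x hx hxS
  exact hx <| Finset.mem_coe.2 (Finset.mem_image_of_mem f hxS)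

lemma FinSupported.hutchinson [MeasurableSingletonClass X] {f g : X → X} (hf : Measurable f)
    (hg : Measurable g) (a b : ℝ≥0∞) (hν : FinSupported N ν) :
    FinSupported (2 * N) (hutchinson a b f g ν) :=
  two_mul N ▸ ((hν.map hf).smul a).add ((hν.map hg).smul b)

end FinSupported

lemma lintegral_edist_rpow_map_prodMap_le {X Y : Type*} [PseudoEMetricSpace X]
    [PseudoEMetricSpace Y] [MeasurableSpace X] [MeasurableSpace Y] {f : X → Y} {r : ℝ≥0}
    (hf : LipschitzWith r f) {p : ℝ} (hp : 0 ≤ p) (π : Measure (X × X)) :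
    ∫⁻ z, edist z.1 z.2 ^ p ∂π.map (Prod.map f f) ≤ (r : ℝ≥0∞) ^ p * ∫⁻ z, edist z.1 z.2 ^ p ∂π :=
  calc ∫⁻ z, edist z.1 z.2 ^ p ∂π.map (Prod.map f f)
      ≤ ∫⁻ z, edist (f z.1) (f z.2) ^ p ∂π := lintegral_map_le _ _
    _ ≤ ∫⁻ z, (r : ℝ≥0∞) ^ p * edist z.1 z.2 ^ p ∂π := lintegral_mono fun z => by
        rw [← ENNReal.mul_rpow_of_nonneg _ _ hp]
        exact ENNReal.rpow_le_rpow (hf z.1 z.2) hp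
    _ = (r : ℝ≥0∞) ^ p * ∫⁻ z, edist z.1 z.2 ^ p ∂π :=
        lintegral_const_mul' _ _ (ENNReal.rpow_ne_top_of_nonneg hp ENNReal.coe_ne_top)

lemma lintegral_edist_rpow_hutchinson_le {X : Type*} [PseudoEMetricSpace X] [MeasurableSpace X]
    {a b : ℝ≥0∞} {f g : X → X} {r : ℝ≥0} (hab : a + b = 1) (hf : LipschitzWith r f)
    (hg : LipschitzWith r g) {p : ℝ} (hp : 0 ≤ p) (π : Measure (X × X)) :
    ∫⁻ z, edist z.1 z.2 ^ p ∂hutchinson a b (Prod.map f f) (Prod.map g g) π ≤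
      (r : ℝ≥0∞) ^ p * ∫⁻ z, edist z.1 z.2 ^ p ∂π := by
  rw [hutchinson, lintegral_add_measure, lintegral_smul_measure, lintegral_smul_measure,
    smul_eq_mul, smul_eq_mul]
  calc _ ≤ a * ((r : ℝ≥0∞) ^ p * ∫⁻ z, edist z.1 z.2 ^ p ∂π) +
        b * ((r : ℝ≥0∞) ^ p * ∫⁻ z, edist z.1 z.2 ^ p ∂π) := by
        gcongr
        exacts [lintegral_edist_rpow_map_prodMap_le hf hp π,
          lintegral_edist_rpow_map_prodMap_le hg hp π]
    _ = _ := by rw [← add_mul, hab, one_mul]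

section Hutchinson

variable {X : Type*} [PseudoMetricSpace X] [MeasurableSpace X] [BorelSpace X] {a b : ℝ≥0∞}
  {f g : X → X} {r : ℝ≥0} {p : ℝ}

-- `r ≠ 0` is needed since `0 * ∞ = 0` in `ℝ≥0∞` and `Wp p μ ν = ∞` when no coupling exists.
lemma Wp_hutchinson_le (hab : a + b = 1) (hf : LipschitzWith r f) (hg : LipschitzWith r g)
    (hr : r ≠ 0) (hp : 0 < p) (μ ν : Measure X) :
    Wp p (hutchinson a b f g μ) (hutchinson a b f g ν) ≤ r * Wp p μ ν := by
  simp only [Wp, ENNReal.mul_iInf_of_ne (ENNReal.coe_ne_zero.2 hr) ENNReal.coe_ne_top]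
  refine le_iInf₂ fun π hπ => ?_
  calc _ ≤ (∫⁻ z, edist z.1 z.2 ^ p ∂hutchinson a b (Prod.map f f) (Prod.map g g) π) ^ (1 / p) :=
        iInf₂_le _ (hπ.hutchinson hf.continuous.measurable hg.continuous.measurable a b)
    _ ≤ ((r : ℝ≥0∞) ^ p * ∫⁻ z, edist z.1 z.2 ^ p ∂π) ^ (1 / p) := by
        gcongr
        exact lintegral_edist_rpow_hutchinson_le hab hf hg hp.le π
    _ = r * (∫⁻ z, edist z.1 z.2 ^ p ∂π) ^ (1 / p) := by
        rw [ENNReal.mul_rpow_of_nonneg _ _ (by positivity), one_div,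
          ENNReal.rpow_rpow_inv hp.ne']

lemma WpDelta_two_mul_le [MeasurableSingletonClass X] {μ : Measure X}
    (hμ : hutchinson a b f g μ = μ) (hab : a + b = 1) (hf : LipschitzWith r f)
    (hg : LipschitzWith r g) (hr : r ≠ 0) (hp : 0 < p) (N : ℕ) :
    WpDelta p μ (2 * N) ≤ r * WpDelta p μ N := by
  have hfm := hf.continuous.measurable
  have hgm := hg.continuous.measurable
  simp only [WpDelta, ENNReal.mul_iInf_of_ne (ENNReal.coe_ne_zero.2 hr) ENNReal.coe_ne_top]
  refine le_iInf₂ fun ν ⟨hνN, hνμ⟩ => ?_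
  have hmass : hutchinson a b f g ν Set.univ = μ Set.univ := by
    rw [← hμ, hutchinson_apply_univ hfm hgm, hutchinson_apply_univ hfm hgm, hνμ]
  calc _ ≤ Wp p μ (hutchinson a b f g ν) := iInf₂_le _ ⟨hνN.hutchinson hfm hgm a b, hmass⟩
    _ = Wp p (hutchinson a b f g μ) (hutchinson a b f g ν) := by rw [hμ]
    _ ≤ r * Wp p μ ν := Wp_hutchinson_le hab hf hg hr hp μ ν

lemma WpDelta_two_pow_le [MeasurableSingletonClass X] {μ : Measure X}
    (hμ : hutchinson a b f g μ = μ) (hab : a + b = 1) (hf : LipschitzWith r f)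
    (hg : LipschitzWith r g) (hr : r ≠ 0) (hp : 0 < p) (k : ℕ) :
    WpDelta p μ (2 ^ k) ≤ r ^ k * WpDelta p μ 1 := by
  induction k with
  | zero => simp
  | succ k ih =>
    calc WpDelta p μ (2 ^ (k + 1)) = WpDelta p μ (2 * 2 ^ k) := by rw [pow_succ']
      _ ≤ r * WpDelta p μ (2 ^ k) := WpDelta_two_mul_le hμ hab hf hg hr hp _
      _ ≤ r * (r ^ k * WpDelta p μ 1) := by gcongr
      _ = r ^ (k + 1) * WpDelta p μ 1 := by rw [pow_succ', mul_assoc]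

end Hutchinson

lemma lipschitzWith_S0 : LipschitzWith 3⁻¹ S0 :=
  LipschitzWith.of_dist_le_mul fun x y => by
    rw [S0, S0, Real.dist_eq, Real.dist_eq, ← sub_div, abs_div,
      abs_of_pos (by norm_num : (0 : ℝ) < 3)]
    push_cast
    linarith

lemma lipschitzWith_S1 : LipschitzWith 3⁻¹ S1 :=
  LipschitzWith.of_dist_le_mul fun x y => by
    rw [S1, S1, Real.dist_eq, Real.dist_eq, add_sub_add_left_eq_sub, ← sub_div,
      sub_sub_sub_cancel_right, abs_div, abs_of_pos (by norm_num : (0 : ℝ) < 3)]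
    push_cast
    linarith

lemma ofReal_two_pow_rpow_log_div_log (k : ℕ) :
    ENNReal.ofReal (((2 : ℝ) ^ k) ^ (Real.log 3 / Real.log 2)) = 3 ^ k := by
  rw [← Real.logb, ← Real.rpow_pow_comm zero_le_two,
    Real.rpow_logb two_pos (by norm_num) three_pos, ENNReal.ofReal_pow zero_le_three,
    ENNReal.ofReal_ofNat]

theorem cantor_dyadic_upper_bound
    (p : ℝ) (hp : 1 ≤ p) (κ : Measure ℝ) (hκ : IsDyadicCantorMeasure κ)
    (s : ℝ) (hs : s = Real.log 2 / Real.log 3) (k : ℕ) :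
    WpDelta p κ (2 ^ k) ≤ ENNReal.ofReal ((3 : ℝ) ^ (-(k : ℝ))) * WpDelta p κ 1 ∧
      WpDelta p κ (2 ^ k) * ENNReal.ofReal (((2 : ℝ) ^ k) ^ (1 / s)) ≤ WpDelta p κ 1 := by
  have hbound : WpDelta p κ (2 ^ k) ≤ 3⁻¹ ^ k * WpDelta p κ 1 := by
    simpa using WpDelta_two_pow_le hκ.2.2.symm ENNReal.inv_two_add_inv_two lipschitzWith_S0
      lipschitzWith_S1 (by norm_num) (by linarith) k
  have hdecay : ENNReal.ofReal ((3 : ℝ) ^ (-(k : ℝ))) = 3⁻¹ ^ k := by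
    rw [Real.rpow_neg zero_le_three, Real.rpow_natCast, ← inv_pow,
      ENNReal.ofReal_pow (by norm_num), ENNReal.ofReal_inv_of_pos three_pos, ENNReal.ofReal_ofNat]
  refine ⟨hdecay ▸ hbound, ?_⟩
  rw [hs, one_div_div, ofReal_two_pow_rpow_log_div_log]
  calc WpDelta p κ (2 ^ k) * 3 ^ k ≤ 3⁻¹ ^ k * WpDelta p κ 1 * 3 ^ k := by gcongr
    _ = WpDelta p κ 1 := by
      rw [mul_comm, ← mul_assoc, ← mul_pow,
        ENNReal.mul_inv_cancel three_ne_zero ENNReal.ofNat_ne_top, one_pow, one_mul]
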